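/- arXiv:2411.05512 — 4 statements merged into one kernel-verified Lean document; each statement's English description precedes it below -/
import Mathlib

section
/- Let X and Y be real-valued random variables on a probability space with X², Y², and X·Y integrable, and suppose σ_X² = Var(X) > 0 and σ_Y² = Var(Y) > 0. Let a, b be real constants and set φ_X = (E[X]−a)/σ_X, φ_Y = (E[Y]−b)/σ_Y, and ρ = Cov(X,Y)/(σ_X·σ_Y). Then E[(X−a)(Y−b)] / (√(E[(X−a)²])·√(E[(Y−b)²])) = (ρ + φ_X·φ_Y) / (√(1+φ_X²)·√(1+φ_Y²)). -/
open MeasureTheory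

/-- Expectation of a real random variable. -/
noncomputable def expVal {Ω : Type*} [MeasurableSpace Ω] (μ : Measure Ω) (X : Ω → ℝ) : ℝ :=
  ∫ ω, X ω ∂μ

/-- Covariance `Cov(X,Y) = E[(X − E[X])(Y − E[Y])]`. -/
noncomputable def covVal {Ω : Type*} [MeasurableSpace Ω] (μ : Measure Ω) (X Y : Ω → ℝ) : ℝ :=
  ∫ ω, (X ω - expVal μ X) * (Y ω - expVal μ Y) ∂μ

/-- Variance `Var(X) = E[(X − E[X])²]`. -/
noncomputable def varVal {Ω : Type*} [MeasurableSpace Ω] (μ : Measure Ω) (X : Ω → ℝ) : ℝ :=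
  ∫ ω, (X ω - expVal μ X) ^ 2 ∂μ

/-! `E[(X−a)(Y−b)] = Cov(X,Y) + (E[X]−a)(E[Y]−b)` and `E[(X−a)²] = Var(X) + (E[X]−a)²`, so after
dividing numerator and denominator by `σ_X σ_Y` the left-hand side becomes the right-hand side. -/

section Moments

variable {Ω : Type*} [MeasurableSpace Ω] {μ : Measure Ω} [IsProbabilityMeasure μ] {X Y : Ω → ℝ}

theorem integral_sub_mul_sub (hX : Integrable X μ) (hY : Integrable Y μ)
    (hXY : Integrable (fun ω => X ω * Y ω) μ) (c d : ℝ) :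
    ∫ ω, (X ω - c) * (Y ω - d) ∂μ =
      (∫ ω, X ω * Y ω ∂μ) - d * (∫ ω, X ω ∂μ) - c * (∫ ω, Y ω ∂μ) + c * d := by
  have hXY_dX : Integrable (fun ω => X ω * Y ω - d * X ω) μ := hXY.sub (hX.const_mul d)
  have hXY_dX_cY : Integrable (fun ω => X ω * Y ω - d * X ω - c * Y ω) μ :=
    hXY_dX.sub (hY.const_mul c)
  have hexpand : (fun ω => (X ω - c) * (Y ω - d)) =
      fun ω => (X ω * Y ω - d * X ω - c * Y ω) + c * d := by
    funext ω; ring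
  rw [hexpand, integral_add hXY_dX_cY (integrable_const _),
    integral_sub hXY_dX (hY.const_mul c), integral_sub hXY (hX.const_mul d),
    integral_const_mul, integral_const_mul, integral_const]
  simp

theorem integral_sub_mul_sub_eq_covVal_add (hX : Integrable X μ) (hY : Integrable Y μ)
    (hXY : Integrable (fun ω => X ω * Y ω) μ) (a b : ℝ) :
    ∫ ω, (X ω - a) * (Y ω - b) ∂μ = covVal μ X Y + (expVal μ X - a) * (expVal μ Y - b) := by
  rw [covVal, integral_sub_mul_sub hX hY hXY, integral_sub_mul_sub hX hY hXY, expVal, expVal]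
  ring

theorem integral_sub_sq_eq_varVal_add (hX : MemLp X 2 μ) (a : ℝ) :
    ∫ ω, (X ω - a) ^ 2 ∂μ = varVal μ X + (expVal μ X - a) ^ 2 := by
  have hXi : Integrable X μ := hX.integrable one_le_two
  have hXX : Integrable (fun ω => X ω * X ω) μ := by simpa only [sq] using hX.integrable_sq
  simpa only [varVal, covVal, sq] using integral_sub_mul_sub_eq_covVal_add hXi hXi hXX a a

end Moments

theorem Real.sqrt_one_add_div_sq {σ : ℝ} (hσ : 0 < σ) (p : ℝ) :
    √(1 + (p / σ) ^ 2) = √(σ ^ 2 + p ^ 2) / σ := by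
  rw [show 1 + (p / σ) ^ 2 = (σ ^ 2 + p ^ 2) / σ ^ 2 by field_simp,
    Real.sqrt_div (by positivity), Real.sqrt_sq hσ.le]

theorem add_mul_div_sqrt_sq_add_mul_sqrt_sq_add {σ τ : ℝ} (hσ : 0 < σ) (hτ : 0 < τ)
    (c p q : ℝ) :
    (c + p * q) / (√(σ ^ 2 + p ^ 2) * √(τ ^ 2 + q ^ 2)) =
      (c / (σ * τ) + p / σ * (q / τ)) / (√(1 + (p / σ) ^ 2) * √(1 + (q / τ) ^ 2)) := by
  have hp : 0 < √(σ ^ 2 + p ^ 2) := Real.sqrt_pos.2 (by positivity)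
  have hq : 0 < √(τ ^ 2 + q ^ 2) := Real.sqrt_pos.2 (by positivity)
  rw [Real.sqrt_one_add_div_sq hσ, Real.sqrt_one_add_div_sq hτ]
  field_simp

/-- The normalized form of the Bairamov–Kotz bivariate local dependence function:
for square-integrable `X`, `Y` with `X·Y` integrable, positive variances, and any constants
`a`, `b`, with `φ_X = (E[X]−a)/σ_X`, `φ_Y = (E[Y]−b)/σ_Y`, `ρ = Cov(X,Y)/(σ_X σ_Y)`,
`E[(X−a)(Y−b)] / (√E[(X−a)²]·√E[(Y−b)²]) = (ρ + φ_X φ_Y)/(√(1+φ_X²)·√(1+φ_Y²))`. -/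
theorem localDependence_normalized_form {Ω : Type*} [MeasurableSpace Ω]
    (μ : Measure Ω) [IsProbabilityMeasure μ] (X Y : Ω → ℝ)
    (hX : MemLp X 2 μ) (hY : MemLp Y 2 μ)
    (hXY : Integrable (fun ω => X ω * Y ω) μ)
    (hVarX : 0 < varVal μ X) (hVarY : 0 < varVal μ Y)
    (a b : ℝ) (σX σY φX φY ρ : ℝ)
    (hσX : σX = Real.sqrt (varVal μ X)) (hσY : σY = Real.sqrt (varVal μ Y))
    (hφX : φX = (expVal μ X - a) / σX) (hφY : φY = (expVal μ Y - b) / σY)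
    (hρ : ρ = covVal μ X Y / (σX * σY)) :
    (∫ ω, (X ω - a) * (Y ω - b) ∂μ) /
        (Real.sqrt (∫ ω, (X ω - a) ^ 2 ∂μ) * Real.sqrt (∫ ω, (Y ω - b) ^ 2 ∂μ)) =
      (ρ + φX * φY) / (Real.sqrt (1 + φX ^ 2) * Real.sqrt (1 + φY ^ 2)) := by
  have hσX_sq : σX ^ 2 = varVal μ X := hσX ▸ Real.sq_sqrt hVarX.le
  have hσY_sq : σY ^ 2 = varVal μ Y := hσY ▸ Real.sq_sqrt hVarY.le
  rw [integral_sub_mul_sub_eq_covVal_add (hX.integrable one_le_two) (hY.integrable one_le_two) hXY,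
    integral_sub_sq_eq_varVal_add hX, integral_sub_sq_eq_varVal_add hY, ← hσX_sq, ← hσY_sq,
    hρ, hφX, hφY]
  exact add_mul_div_sqrt_sq_add_mul_sqrt_sq_add (hσX ▸ Real.sqrt_pos.2 hVarX)
    (hσY ▸ Real.sqrt_pos.2 hVarY) _ _ _
end

section
/- Let ρ ∈ ℝ with −1 ≤ ρ ≤ 1, and define h(t,s) = (ρ + t·s)/(√(1+t²)·√(1+s²)) for t, s ∈ ℝ. Then (0,0) is a saddle point of h in the following sense: h(0,0) = ρ, h(t,t) ≥ ρ for every real t, and h(t,−t) ≤ ρ for every real t. -/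
/- Along the diagonal, `√(1+t²)·√(1+t²) = 1 + t²`, so `h(t, ±t) = (ρ ± t²)/(1 + t²)` is a convex
combination of `ρ` and `±1`; it therefore lies above `ρ` when `ρ ≤ 1` and below `ρ` when `-1 ≤ ρ`. -/

lemma le_add_div_one_add {ρ x : ℝ} (hρ : ρ ≤ 1) (hx : 0 ≤ x) : ρ ≤ (ρ + x) / (1 + x) := by
  rw [le_div_iff₀ (by positivity)]
  nlinarith

lemma sub_div_one_add_le {ρ x : ℝ} (hρ : -1 ≤ ρ) (hx : 0 ≤ x) : (ρ - x) / (1 + x) ≤ ρ := by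
  rw [div_le_iff₀ (by positivity)]
  nlinarith

/-- For `−1 ≤ ρ ≤ 1`, the reduced local dependence function
`h(t,s) = (ρ + t·s)/(√(1+t²)·√(1+s²))` has a saddle point at `(0,0)`:
`h(0,0) = ρ`, `h(t,t) ≥ ρ` for every real `t`, and `h(t,−t) ≤ ρ` for every real `t`. -/
theorem reduced_localDependence_saddle_point (ρ : ℝ) (h1 : -1 ≤ ρ) (h2 : ρ ≤ 1) :
    (ρ + (0 : ℝ) * 0) / (Real.sqrt (1 + (0 : ℝ) ^ 2) * Real.sqrt (1 + (0 : ℝ) ^ 2)) = ρ ∧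
    (∀ t : ℝ, ρ ≤ (ρ + t * t) / (Real.sqrt (1 + t ^ 2) * Real.sqrt (1 + t ^ 2))) ∧
    (∀ t : ℝ, (ρ + t * (-t)) / (Real.sqrt (1 + t ^ 2) * Real.sqrt (1 + (-t) ^ 2)) ≤ ρ) := by
  have sqrt_mul_self (t : ℝ) : Real.sqrt (1 + t ^ 2) * Real.sqrt (1 + t ^ 2) = 1 + t ^ 2 :=
    Real.mul_self_sqrt (by positivity)
  refine ⟨by simp, fun t => ?_, fun t => ?_⟩
  · rw [sqrt_mul_self, ← sq]
    exact le_add_div_one_add h2 (sq_nonneg t)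
  · rw [neg_sq, sqrt_mul_self, mul_neg, ← sq, ← sub_eq_add_neg]
    exact sub_div_one_add_le h1 (sq_nonneg t)
end

section
/- Let X, Y, Z be pairwise independent real-valued random variables on a probability space (each of the pairs (X,Y), (X,Z), (Y,Z) is independent) such that all products of at most three of X, Y, Z are integrable, and suppose σ_X² = Var(X) > 0, σ_Y² = Var(Y) > 0, σ_Z² = Var(Z) > 0. Let a, b, c be real constants and set φ_X = (E[X]−a)/σ_X, φ_Y = (E[Y]−b)/σ_Y, φ_Z = (E[Z]−c)/σ_Z, and ρ_{XYZ} = E[(X−E[X])(Y−E[Y])(Z−E[Z])]/(σ_X σ_Y σ_Z). Then E[(X−a)(Y−b)(Z−c)] / √(E[(X−a)²]·E[(Y−b)²]·E[(Z−c)²]) = (ρ_{XYZ} + φ_X·φ_Y·φ_Z) / (√(1+φ_X²)·√(1+φ_Y²)·√(1+φ_Z²)). -/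
/-!
Pairwise independence gives `E[XY] = E X · E Y` and likewise for the other pairs, so expanding
`(X-a)(Y-b)(Z-c)` shows that `E[(X-a)(Y-b)(Z-c)] - (E X - a)(E Y - b)(E Z - c)` does not depend
on `a, b, c`; taking `a, b, c` to be the means identifies it with the central third moment.
Similarly `E[(X-a)²] = Var X + (E X - a)²`, and dividing numerator and denominator by
`σ_X σ_Y σ_Z` gives the standardized form.
-/

open MeasureTheory ProbabilityTheory

open Real

section Moments

variable {Ω : Type*} [MeasurableSpace Ω] {μ : Measure Ω} [IsProbabilityMeasure μ]
  {X Y Z : Ω → ℝ}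

lemma integral_sub_const_sq (hX : Integrable X μ) (hXX : Integrable (fun ω => X ω * X ω) μ)
    (a : ℝ) :
    ∫ ω, (X ω - a) ^ 2 ∂μ = (∫ ω, X ω * X ω ∂μ) - 2 * a * expVal μ X + a ^ 2 := by
  have expand : ∀ ω, (X ω - a) ^ 2 = X ω * X ω - 2 * a * X ω + a ^ 2 := fun ω => by ring
  simp only [expand]
  rw [integral_add (by fun_prop) (by fun_prop), integral_sub (by fun_prop) (by fun_prop)]
  simp [integral_const_mul, expVal]

lemma integral_sub_const_sq_eq_varVal_add (hX : Integrable X μ)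
    (hXX : Integrable (fun ω => X ω * X ω) μ) (a : ℝ) :
    ∫ ω, (X ω - a) ^ 2 ∂μ = varVal μ X + (expVal μ X - a) ^ 2 := by
  rw [varVal, integral_sub_const_sq hX hXX, integral_sub_const_sq hX hXX]
  ring

lemma integral_sub_const_mul_sub_const_mul_sub_const (hX : Integrable X μ)
    (hY : Integrable Y μ) (hZ : Integrable Z μ) (hXY : Integrable (fun ω => X ω * Y ω) μ)
    (hXZ : Integrable (fun ω => X ω * Z ω) μ) (hYZ : Integrable (fun ω => Y ω * Z ω) μ)
    (hXYZ : Integrable (fun ω => X ω * Y ω * Z ω) μ) (a b c : ℝ) :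
    ∫ ω, (X ω - a) * (Y ω - b) * (Z ω - c) ∂μ =
      (∫ ω, X ω * Y ω * Z ω ∂μ) - c * (∫ ω, X ω * Y ω ∂μ) - b * (∫ ω, X ω * Z ω ∂μ)
        - a * (∫ ω, Y ω * Z ω ∂μ) + b * c * expVal μ X + a * c * expVal μ Y
        + a * b * expVal μ Z - a * b * c := by
  have expand : ∀ ω, (X ω - a) * (Y ω - b) * (Z ω - c) =
      X ω * Y ω * Z ω - c * (X ω * Y ω) - b * (X ω * Z ω) - a * (Y ω * Z ω)
        + b * c * X ω + a * c * Y ω + a * b * Z ω - a * b * c := fun ω => by ring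
  simp only [expand]
  rw [integral_sub (by fun_prop) (by fun_prop), integral_add (by fun_prop) (by fun_prop),
    integral_add (by fun_prop) (by fun_prop), integral_add (by fun_prop) (by fun_prop),
    integral_sub (by fun_prop) (by fun_prop), integral_sub (by fun_prop) (by fun_prop),
    integral_sub (by fun_prop) (by fun_prop)]
  simp [integral_const_mul, expVal]

lemma integral_sub_const_mul_sub_const_mul_sub_const_of_indepFun (hX : Integrable X μ)
    (hY : Integrable Y μ) (hZ : Integrable Z μ)
    (hXYZ : Integrable (fun ω => X ω * Y ω * Z ω) μ) (hIndXY : IndepFun X Y μ)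
    (hIndXZ : IndepFun X Z μ) (hIndYZ : IndepFun Y Z μ) (a b c : ℝ) :
    ∫ ω, (X ω - a) * (Y ω - b) * (Z ω - c) ∂μ =
      (∫ ω, (X ω - expVal μ X) * (Y ω - expVal μ Y) * (Z ω - expVal μ Z) ∂μ)
        + (expVal μ X - a) * (expVal μ Y - b) * (expVal μ Z - c) := by
  have expand := integral_sub_const_mul_sub_const_mul_sub_const hX hY hZ
    (hIndXY.integrable_mul hX hY) (hIndXZ.integrable_mul hX hZ) (hIndYZ.integrable_mul hY hZ)
    hXYZ
  rw [expand, expand, hIndXY.integral_fun_mul_eq_mul_integral hX.1 hY.1,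
    hIndXZ.integral_fun_mul_eq_mul_integral hX.1 hZ.1,
    hIndYZ.integral_fun_mul_eq_mul_integral hY.1 hZ.1]
  unfold expVal
  ring

end Moments

lemma sqrt_add_sq_eq_sqrt_mul_sqrt_one_add_div_sq {v : ℝ} (hv : 0 < v) (d : ℝ) :
    √(v + d ^ 2) = √v * √(1 + (d / √v) ^ 2) := by
  rw [← sqrt_mul hv.le, mul_add, mul_one, div_pow, sq_sqrt hv.le, mul_div_cancel₀ _ hv.ne']

lemma add_mul_mul_div_sqrt_eq_standardized {u v w : ℝ} (hu : 0 < u) (hv : 0 < v) (hw : 0 < w)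
    (t d e f : ℝ) :
    (t + d * e * f) / √((u + d ^ 2) * (v + e ^ 2) * (w + f ^ 2)) =
      (t / (√u * √v * √w) + d / √u * (e / √v) * (f / √w)) /
        (√(1 + (d / √u) ^ 2) * √(1 + (e / √v) ^ 2) * √(1 + (f / √w) ^ 2)) := by
  rw [sqrt_mul (by positivity), sqrt_mul (by positivity),
    sqrt_add_sq_eq_sqrt_mul_sqrt_one_add_div_sq hu, sqrt_add_sq_eq_sqrt_mul_sqrt_one_add_div_sq hv,
    sqrt_add_sq_eq_sqrt_mul_sqrt_one_add_div_sq hw]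
  have hu' := sqrt_pos.2 hu
  have hv' := sqrt_pos.2 hv
  have hw' := sqrt_pos.2 hw
  field_simp

theorem trivariate_localDependence_of_pairwise_indep_general {Ω : Type*} [MeasurableSpace Ω]
    (μ : Measure Ω) [IsProbabilityMeasure μ] (X Y Z : Ω → ℝ)
    (hX : Integrable X μ) (hY : Integrable Y μ) (hZ : Integrable Z μ)
    (hXYZ : Integrable (fun ω => X ω * Y ω * Z ω) μ)
    (hXX : Integrable (fun ω => X ω * X ω) μ)
    (hYY : Integrable (fun ω => Y ω * Y ω) μ)
    (hZZ : Integrable (fun ω => Z ω * Z ω) μ)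
    (hIndXY : IndepFun X Y μ) (hIndXZ : IndepFun X Z μ) (hIndYZ : IndepFun Y Z μ)
    (hVarX : 0 < varVal μ X) (hVarY : 0 < varVal μ Y) (hVarZ : 0 < varVal μ Z)
    (a b c : ℝ) (σX σY σZ φX φY φZ ρXYZ : ℝ)
    (hσX : σX = Real.sqrt (varVal μ X)) (hσY : σY = Real.sqrt (varVal μ Y))
    (hσZ : σZ = Real.sqrt (varVal μ Z))
    (hφX : φX = (expVal μ X - a) / σX) (hφY : φY = (expVal μ Y - b) / σY)
    (hφZ : φZ = (expVal μ Z - c) / σZ)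
    (hρXYZ : ρXYZ =
      (∫ ω, (X ω - expVal μ X) * (Y ω - expVal μ Y) * (Z ω - expVal μ Z) ∂μ) /
        (σX * σY * σZ)) :
    (∫ ω, (X ω - a) * (Y ω - b) * (Z ω - c) ∂μ) /
        Real.sqrt ((∫ ω, (X ω - a) ^ 2 ∂μ) * (∫ ω, (Y ω - b) ^ 2 ∂μ) *
          (∫ ω, (Z ω - c) ^ 2 ∂μ)) =
      (ρXYZ + φX * φY * φZ) /
        (Real.sqrt (1 + φX ^ 2) * Real.sqrt (1 + φY ^ 2) * Real.sqrt (1 + φZ ^ 2)) := by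
  subst hσX hσY hσZ hφX hφY hφZ hρXYZ
  rw [integral_sub_const_mul_sub_const_mul_sub_const_of_indepFun hX hY hZ hXYZ hIndXY hIndXZ
      hIndYZ, integral_sub_const_sq_eq_varVal_add hX hXX,
    integral_sub_const_sq_eq_varVal_add hY hYY, integral_sub_const_sq_eq_varVal_add hZ hZZ]
  exact add_mul_mul_div_sqrt_eq_standardized hVarX hVarY hVarZ _ _ _ _

/-- Under pairwise independence of `X`, `Y`, `Z` the pairwise correlation terms vanish
from the three-variate local dependence function:
`E[(X−a)(Y−b)(Z−c)] / √(E[(X−a)²]·E[(Y−b)²]·E[(Z−c)²])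
 = (ρ_{XYZ} + φ_X φ_Y φ_Z)/(√(1+φ_X²)·√(1+φ_Y²)·√(1+φ_Z²))`. -/
theorem trivariate_localDependence_of_pairwise_indep {Ω : Type*} [MeasurableSpace Ω]
    (μ : Measure Ω) [IsProbabilityMeasure μ] (X Y Z : Ω → ℝ)
    (hX : Integrable X μ) (hY : Integrable Y μ) (hZ : Integrable Z μ)
    (hXY : Integrable (fun ω => X ω * Y ω) μ)
    (hXZ : Integrable (fun ω => X ω * Z ω) μ)
    (hYZ : Integrable (fun ω => Y ω * Z ω) μ)
    (hXYZ : Integrable (fun ω => X ω * Y ω * Z ω) μ)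
    (hXX : Integrable (fun ω => X ω * X ω) μ)
    (hYY : Integrable (fun ω => Y ω * Y ω) μ)
    (hZZ : Integrable (fun ω => Z ω * Z ω) μ)
    (hIndXY : IndepFun X Y μ) (hIndXZ : IndepFun X Z μ) (hIndYZ : IndepFun Y Z μ)
    (hVarX : 0 < varVal μ X) (hVarY : 0 < varVal μ Y) (hVarZ : 0 < varVal μ Z)
    (a b c : ℝ) (σX σY σZ φX φY φZ ρXYZ : ℝ)
    (hσX : σX = Real.sqrt (varVal μ X)) (hσY : σY = Real.sqrt (varVal μ Y))
    (hσZ : σZ = Real.sqrt (varVal μ Z))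
    (hφX : φX = (expVal μ X - a) / σX) (hφY : φY = (expVal μ Y - b) / σY)
    (hφZ : φZ = (expVal μ Z - c) / σZ)
    (hρXYZ : ρXYZ =
      (∫ ω, (X ω - expVal μ X) * (Y ω - expVal μ Y) * (Z ω - expVal μ Z) ∂μ) /
        (σX * σY * σZ)) :
    (∫ ω, (X ω - a) * (Y ω - b) * (Z ω - c) ∂μ) /
        Real.sqrt ((∫ ω, (X ω - a) ^ 2 ∂μ) * (∫ ω, (Y ω - b) ^ 2 ∂μ) *
          (∫ ω, (Z ω - c) ^ 2 ∂μ)) =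
      (ρXYZ + φX * φY * φZ) /
        (Real.sqrt (1 + φX ^ 2) * Real.sqrt (1 + φY ^ 2) * Real.sqrt (1 + φZ ^ 2)) :=
  trivariate_localDependence_of_pairwise_indep_general μ X Y Z hX hY hZ hXYZ hXX hYY hZZ hIndXY
    hIndXZ hIndYZ hVarX hVarY hVarZ a b c σX σY σZ φX φY φZ ρXYZ hσX hσY hσZ hφX hφY hφZ hρXYZ
end

section
/- Let n ≥ 2 and let X₁, …, Xₙ be real-valued random variables on a probability space such that every product of a subfamily of the Xᵢ is integrable. Suppose every proper subfamily is mutually independent, i.e. for every subset S ⊊ {1,…,n} with 2 ≤ |S| ≤ n−1, the random variables (Xᵢ)_{i∈S} are mutually independent. Then for all real constants a₁, …, aₙ: E[∏_{i=1}^{n}(Xᵢ−aᵢ)] = E[∏_{i=1}^{n}(Xᵢ−E[Xᵢ])] + ∏_{i=1}^{n}(E[Xᵢ]−aᵢ). Consequently, if additionally Var(Xᵢ) = σᵢ² > 0 for all i and φᵢ = (E[Xᵢ]−aᵢ)/σᵢ, ρ = E[∏_{i=1}^{n}(Xᵢ−E[Xᵢ])]/∏σᵢ, then E[∏(Xᵢ−aᵢ)]/∏√(E[(Xᵢ−aᵢ)²])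 = (ρ + ∏φᵢ)/∏√(1+φᵢ²). -/
/-!
Write `Xᵢ - aᵢ = (Xᵢ - E Xᵢ) + (E Xᵢ - aᵢ)` and expand the product: the term indexed by a set `T`
of indices is `E[∏_{i ∈ T} (Xᵢ - E Xᵢ)] · ∏_{i ∉ T} (E Xᵢ - aᵢ)`. For nonempty proper `T` the
variables indexed by `T` are independent (trivially when `|T| = 1`), so the expectation factors
into centred means and vanishes; only `T = ∅` and `T` = all indices survive. The normalized form
then follows from `E[(Xᵢ - aᵢ)²] = σᵢ² + (E Xᵢ - aᵢ)²`.
-/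

open MeasureTheory ProbabilityTheory

section

variable {Ω ι : Type*} [MeasurableSpace Ω] {μ : Measure Ω}

lemma integral_prod_sub_expVal_eq_zero {X : ι → Ω → ℝ} {s : Finset ι} (hs : s.Nonempty)
    (hX : iIndepFun (fun i : s => X i) μ) (hint : ∀ i ∈ s, Integrable (X i) μ) :
    ∫ ω, ∏ i ∈ s, (X i ω - expVal μ (X i)) ∂μ = 0 := by
  have := hX.isProbabilityMeasure
  obtain ⟨j, hj⟩ := hs
  simp_rw [← Finset.prod_coe_sort s]
  rw [hX.integral_fun_prod_comp (f := fun (i : s) x => x - expVal μ (X i))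
    (fun i => (hint i i.2).aemeasurable) (fun i => by fun_prop)]
  refine Finset.prod_eq_zero (Finset.mem_univ ⟨j, hj⟩) ?_
  rw [integral_sub (hint j hj) (integrable_const _), integral_const, probReal_univ, one_smul,
    expVal, sub_self]

lemma integrable_prod_sub_const {X : ι → Ω → ℝ} (c : ι → ℝ) (t : Finset ι)
    (h : ∀ u ⊆ t, Integrable (fun ω => ∏ i ∈ u, X i ω) μ) :
    Integrable (fun ω => ∏ i ∈ t, (X i ω - c i)) μ := by
  classical
  have hexpand : (fun ω => ∏ i ∈ t, (X i ω - c i)) =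
      fun ω => ∑ u ∈ t.powerset, (∏ i ∈ u, X i ω) * ∏ i ∈ t \ u, (-c i) := by
    funext ω
    simp only [sub_eq_add_neg]
    exact Finset.prod_add _ _ _
  rw [hexpand]
  exact integrable_finsetSum _ fun u hu => (h u (Finset.mem_powerset.mp hu)).mul_const _

lemma integral_prod_add_const_of_integral_proper_prod_eq_zero [IsProbabilityMeasure μ]
    [Fintype ι] [Nonempty ι] {f : ι → Ω → ℝ} (c : ι → ℝ)
    (hint : ∀ t : Finset ι, Integrable (fun ω => ∏ i ∈ t, f i ω) μ)
    (hzero : ∀ t : Finset ι, t.Nonempty → t ≠ Finset.univ → ∫ ω, ∏ i ∈ t, f i ω ∂μ = 0) :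
    ∫ ω, ∏ i, (f i ω + c i) ∂μ = ∫ ω, ∏ i, f i ω ∂μ + ∏ i, c i := by
  classical
  simp_rw [Finset.prod_add]
  rw [integral_finsetSum _ fun t _ => (hint t).mul_const _]
  simp_rw [integral_mul_const]
  rw [Finset.sum_eq_add_of_mem Finset.univ ∅ (Finset.mem_powerset_self _)
    (Finset.empty_mem_powerset _) Finset.univ_nonempty.ne_empty]
  · simp
  · rintro t - ⟨htu, hte⟩
    rw [hzero t (Finset.nonempty_iff_ne_empty.mpr hte) htu, zero_mul]

lemma integral_sub_sq_eq_varVal_add_sq [IsProbabilityMeasure μ] {X : Ω → ℝ}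
    (hX : Integrable X μ) (hX2 : Integrable (fun ω => X ω ^ 2) μ) (a : ℝ) :
    ∫ ω, (X ω - a) ^ 2 ∂μ = varVal μ X + (expVal μ X - a) ^ 2 := by
  have hsq : ∀ c : ℝ, ∫ ω, (X ω - c) ^ 2 ∂μ = ∫ ω, X ω ^ 2 ∂μ - 2 * c * expVal μ X + c ^ 2 := by
    intro c
    have hexpand : (fun ω => (X ω - c) ^ 2) = fun ω => X ω ^ 2 - 2 * c * X ω + c ^ 2 := by
      funext ω; ring
    rw [hexpand, integral_add (f := fun ω => X ω ^ 2 - 2 * c * X ω) (hX2.sub (hX.const_mul _))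
        (integrable_const _),
      integral_sub hX2 (hX.const_mul _), integral_const_mul, integral_const, probReal_univ,
      one_smul, expVal]
  rw [varVal, hsq, hsq]
  ring

end

lemma div_prod_sqrt_add_sq {ι : Type*} [Fintype ι] (r : ℝ) {v : ι → ℝ} (d : ι → ℝ)
    (hv : ∀ i, 0 < v i) :
    (r + ∏ i, d i) / ∏ i, √(v i + d i ^ 2) =
      (r / ∏ i, √(v i) + ∏ i, (d i / √(v i))) / ∏ i, √(1 + (d i / √(v i)) ^ 2) := by
  have hsqrt : ∀ i, √(v i + d i ^ 2) = √(v i) * √(1 + (d i / √(v i)) ^ 2) := by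
    intro i
    rw [← Real.sqrt_mul (hv i).le, div_pow, Real.sq_sqrt (hv i).le, mul_add, mul_one,
      mul_div_cancel₀ _ (hv i).ne']
  simp_rw [hsqrt, Finset.prod_mul_distrib, Finset.prod_div_distrib]
  rw [← add_div, div_div]

/-- If every proper subfamily of size between `2` and `n−1` of `X₁, …, Xₙ` is mutually
independent, then `E[∏ᵢ(Xᵢ−aᵢ)] = E[∏ᵢ(Xᵢ−E[Xᵢ])] + ∏ᵢ(E[Xᵢ]−aᵢ)`; consequently, with
positive variances, `φᵢ = (E[Xᵢ]−aᵢ)/σᵢ` and `ρ = E[∏ᵢ(Xᵢ−E[Xᵢ])]/∏σᵢ`, one has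
`E[∏(Xᵢ−aᵢ)]/∏√E[(Xᵢ−aᵢ)²] = (ρ + ∏φᵢ)/∏√(1+φᵢ²)`. -/
theorem multivariate_localDependence_of_proper_subfamily_indep {Ω : Type*}
    [MeasurableSpace Ω] (μ : Measure Ω) [IsProbabilityMeasure μ]
    (n : ℕ) (hn : 2 ≤ n) (X : Fin n → Ω → ℝ)
    (hInt : ∀ m : Multiset (Fin n), m.card ≤ n →
      Integrable (fun ω => (m.map (fun i => X i ω)).prod) μ)
    (hInd : ∀ S : Finset (Fin n), 2 ≤ S.card → S.card ≤ n - 1 →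
      iIndepFun (m := fun _ : S => (inferInstance : MeasurableSpace ℝ))
        (fun i : S => X i) μ) :
    (∀ a : Fin n → ℝ,
      ∫ ω, ∏ i, (X i ω - a i) ∂μ =
        (∫ ω, ∏ i, (X i ω - expVal μ (X i)) ∂μ) + ∏ i, (expVal μ (X i) - a i)) ∧
    (∀ a : Fin n → ℝ, (∀ i, 0 < varVal μ (X i)) →
      (∫ ω, ∏ i, (X i ω - a i) ∂μ) /
          ∏ i, Real.sqrt (∫ ω, (X i ω - a i) ^ 2 ∂μ) =
        ((∫ ω, ∏ i, (X i ω - expVal μ (X i)) ∂μ) /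
            (∏ i, Real.sqrt (varVal μ (X i))) +
          ∏ i, ((expVal μ (X i) - a i) / Real.sqrt (varVal μ (X i)))) /
          ∏ i, Real.sqrt
            (1 + ((expVal μ (X i) - a i) / Real.sqrt (varVal μ (X i))) ^ 2)) := by
  have : Nonempty (Fin n) := ⟨⟨0, by omega⟩⟩
  have hprod : ∀ t : Finset (Fin n), Integrable (fun ω => ∏ i ∈ t, X i ω) μ := fun t =>
    hInt t.val (by simpa using t.card_le_univ)
  have hXint : ∀ i, Integrable (X i) μ := fun i => by simpa using hprod {i}
  have hXsq : ∀ i, Integrable (fun ω => X i ω ^ 2) μ := fun i => by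
    simpa [sq] using hInt {i, i} (by simpa using hn)
  have hindep : ∀ t : Finset (Fin n), t ≠ Finset.univ → iIndepFun (fun i : t => X i) μ := by
    intro t ht
    have hlt : t.card < n := by simpa using Finset.card_lt_card (Finset.ssubset_univ_iff.mpr ht)
    rcases le_or_gt t.card 1 with h1 | h2
    · have := Finset.card_le_one_iff_subsingleton_coe.mp h1
      exact iIndepFun.of_subsingleton
    · exact hInd t h2 (by omega)
  have hexpansion : ∀ a : Fin n → ℝ, ∫ ω, ∏ i, (X i ω - a i) ∂μ =
      (∫ ω, ∏ i, (X i ω - expVal μ (X i)) ∂μ) + ∏ i, (expVal μ (X i) - a i) := fun a => by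
    simpa using integral_prod_add_const_of_integral_proper_prod_eq_zero
      (f := fun i ω => X i ω - expVal μ (X i)) (fun i => expVal μ (X i) - a i)
      (fun t => integrable_prod_sub_const _ t fun u _ => hprod u)
      (fun t ht htu => integral_prod_sub_expVal_eq_zero ht (hindep t htu) fun i _ => hXint i)
  refine ⟨hexpansion, fun a hvar => ?_⟩
  simp_rw [hexpansion a, integral_sub_sq_eq_varVal_add_sq (hXint _) (hXsq _)]
  exact div_prod_sqrt_add_sq _ _ hvar
end
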